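/- (Attainment of the strong Fano bound.) Let q ≥ 2 and let p be a joint pmf of (x, y) on Fin m × Fin q. Suppose (i) uniform informativeness: there is h ≥ 0 such that H(p(· | j)) = h for every j with p_X(j) > 0, and (ii) no clear runner-up: for every j with p_X(j) > 0, the (q - 1) least likely outcomes of the conditional pmf p(· | j) are equally likely (a condition that is automatic when q = 2). Then Acc = ∑ over j with p_X(j) > 0 of p_X(j) * (max i, p(i | j)) satisfies h̄_q(Acc) = h, i.e. Acc = h̄_q⁻¹(H(y | x)) and the strong Fano bound is attained. -/

import Mathlib

/-- `h̄_q(a) = -a log a - (1-a) log((1-a)/(q-1))`, natural log, with the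
convention `0 · log 0 = 0` (Mathlib's `Real.log 0 = 0` realizes it). -/
noncomputable def hbar (q : ℕ) (a : ℝ) : ℝ :=
  -a * Real.log a - (1 - a) * Real.log ((1 - a) / ((q : ℝ) - 1))

/-- `h̄_q⁻¹ : [0, log q] → [1/q, 1]`, the inverse of the strictly decreasing
bijection `h̄_q : [1/q, 1] → [0, log q]`. -/
noncomputable def hbarInv (q : ℕ) (h : ℝ) : ℝ :=
  Function.invFunOn (hbar q) (Set.Icc (1 / (q : ℝ)) 1) h

/-- Shannon entropy of a probability vector, in nats, convention `0 log 0 = 0`. -/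
noncomputable def entropy {q : ℕ} (r : Fin q → ℝ) : ℝ :=
  -∑ i, r i * Real.log (r i)

/-!
Under (ii) each conditional pmf `p(·|j)` is the "Fano-extremal" vector with top entry
`a_j = max_i p(i|j)` and all other entries `(1 - a_j)/(q - 1)`, whose entropy is exactly
`h̄_q(a_j)`. By (i) all these entropies equal `h`, and since `h̄_q` is injective on
`[1/q, 1]` every `a_j` equals `h̄_q⁻¹(h)`; averaging over `p_X` gives `Acc = h̄_q⁻¹(h)`,
while `H(y|x) = h`.
-/

open Finset Real

section Hbar

variable {q : ℕ}

lemma hbar_eq_negMulLog (hq : 1 < q) (a : ℝ) :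
    hbar q a = negMulLog a + negMulLog (1 - a) + (1 - a) * log (q - 1) := by
  have hq1 : (q : ℝ) - 1 ≠ 0 := sub_ne_zero.2 (by exact_mod_cast hq.ne')
  rcases eq_or_ne a 1 with rfl | ha
  · simp [hbar, negMulLog]
  · rw [hbar, log_div (sub_ne_zero.2 ha.symm) hq1, negMulLog, negMulLog]
    ring

lemma continuous_hbar (hq : 1 < q) : Continuous (hbar q) := by
  rw [funext (hbar_eq_negMulLog hq)]
  fun_prop

lemma hasDerivAt_hbar (hq : 1 < q) {a : ℝ} (ha₀ : a ≠ 0) (ha₁ : a ≠ 1) :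
    HasDerivAt (hbar q) (log (1 - a) - log a - log (q - 1)) a := by
  rw [funext (hbar_eq_negMulLog hq)]
  have hsub : HasDerivAt (fun x : ℝ => 1 - x) (-1) a := by
    simpa using (hasDerivAt_id a).const_sub 1
  exact (((hasDerivAt_negMulLog ha₀).add
    ((hasDerivAt_negMulLog (sub_ne_zero.2 ha₁.symm)).comp a hsub)).add
    (hsub.mul_const (log (q - 1)))).congr_deriv (by ring)

lemma hbar_strictAntiOn (hq : 1 < q) : StrictAntiOn (hbar q) (Set.Icc (1 / (q : ℝ)) 1) := by
  have hq' : (1 : ℝ) < q := by exact_mod_cast hq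
  refine strictAntiOn_of_deriv_neg (convex_Icc _ _) (continuous_hbar hq).continuousOn ?_
  intro a ha
  rw [interior_Icc] at ha
  obtain ⟨hqa, ha1⟩ := ha
  have ha0 : 0 < a := (by positivity : (0 : ℝ) < 1 / q).trans hqa
  rw [(hasDerivAt_hbar hq ha0.ne' ha1.ne).deriv, sub_sub, sub_neg,
    ← log_mul ha0.ne' (by linarith)]
  -- `h̄_q' (a) = log ((1 - a) / (a (q - 1)))`, negative exactly when `a > 1/q`.
  refine log_lt_log (by linarith) ?_
  have : 1 < a * q := by rwa [div_lt_iff₀ (by linarith)] at hqa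
  linarith

lemma hbarInv_hbar (hq : 1 < q) {a : ℝ} (ha : a ∈ Set.Icc (1 / (q : ℝ)) 1) :
    hbarInv q (hbar q a) = a :=
  (hbar_strictAntiOn hq).injOn.leftInvOn_invFunOn ha

end Hbar

lemma entropy_eq_hbar {q : ℕ} (hq : 1 < q) {r : Fin q → ℝ} {i₀ : Fin q}
    (hrest : ∀ i, i ≠ i₀ → r i = (1 - r i₀) / (q - 1)) :
    entropy r = hbar q (r i₀) := by
  have hq1 : (q : ℝ) - 1 ≠ 0 := sub_ne_zero.2 (by exact_mod_cast hq.ne')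
  have hcard : ((univ.erase i₀).card : ℝ) = q - 1 := by
    rw [card_erase_of_mem (mem_univ _), card_univ, Fintype.card_fin,
      Nat.cast_sub hq.le, Nat.cast_one]
  rw [entropy, ← add_sum_erase _ _ (mem_univ i₀),
    sum_congr rfl fun i hi => by rw [hrest i (ne_of_mem_erase hi)],
    sum_const, nsmul_eq_mul, hcard, hbar]
  field_simp
  ring

lemma sup'_mem_Icc_and_hbar_eq {q : ℕ} (hq : 1 < q) {r : Fin q → ℝ} (hne : univ.Nonempty)
    (hr0 : ∀ i, 0 ≤ r i) (hr1 : ∑ i, r i = 1) {i₀ : Fin q} (hmax : ∀ i, r i ≤ r i₀)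
    (hrest : ∀ i, i ≠ i₀ → r i = (1 - r i₀) / (q - 1)) :
    univ.sup' hne r ∈ Set.Icc (1 / (q : ℝ)) 1 ∧ hbar q (univ.sup' hne r) = entropy r := by
  have hsup : univ.sup' hne r = r i₀ :=
    le_antisymm (sup'_le _ _ fun i _ => hmax i) (le_sup' r (mem_univ i₀))
  rw [hsup, entropy_eq_hbar hq hrest]
  refine ⟨⟨?_, hr1 ▸ single_le_sum (fun i _ => hr0 i) (mem_univ i₀)⟩, rfl⟩
  have hsum : (1 : ℝ) ≤ q * r i₀ := by
    simpa [hr1] using sum_le_card_nsmul univ r (r i₀) fun i _ => hmax i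
  rw [div_le_iff₀ (by positivity)]
  linarith

lemma sum_filter_marginal_pos_eq_one {α β : Type*} [Fintype α] [Fintype β]
    {p : α × β → ℝ} (hp0 : ∀ t, 0 ≤ p t) (hp1 : ∑ t, p t = 1)
    {pX : α → ℝ} (hpX : ∀ j, pX j = ∑ i, p (j, i)) :
    ∑ j ∈ univ.filter (fun j => 0 < pX j), pX j = 1 := by
  rw [sum_filter_of_ne, ← hp1, Fintype.sum_prod_type]
  · exact sum_congr rfl fun j _ => hpX j
  · intro j _ hj
    exact lt_of_le_of_ne (hpX j ▸ sum_nonneg fun i _ => hp0 _) (Ne.symm hj)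

/-- Attainment of the strong Fano bound: for a joint pmf `p` of
`(x, y)` on `Fin m × Fin q` (`q ≥ 2`), if (i) every conditional pmf `p(·|j)`
(for `p_X(j) > 0`) has the same entropy `h ≥ 0`, and (ii) for every such `j`
the `q - 1` least likely outcomes of `p(·|j)` are equally likely, then
`Acc = ∑_{j : p_X(j) > 0} p_X(j) max_i p(i|j)` satisfies `h̄_q(Acc) = h`,
i.e. `Acc = h̄_q⁻¹(H(y|x))`. -/
theorem stmt_12 (m q : ℕ) (hq : 2 ≤ q) (p : Fin m × Fin q → ℝ)
    (hp0 : ∀ t, 0 ≤ p t) (hp1 : ∑ t, p t = 1)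
    (pX : Fin m → ℝ) (hpX : ∀ j, pX j = ∑ i, p (j, i))
    (cond : Fin m → Fin q → ℝ) (hcond : ∀ j i, cond j i = p (j, i) / pX j)
    (h : ℝ)
    (hunif : ∀ j, 0 < pX j → entropy (cond j) = h)
    (hrunner : ∀ j, 0 < pX j → ∃ istar : Fin q,
      (∀ i, cond j i ≤ cond j istar) ∧
      ∀ i, i ≠ istar → cond j i = (1 - cond j istar) / ((q : ℝ) - 1))
    (Acc : ℝ) (hAcc : Acc = ∑ j ∈ Finset.univ.filter (fun j : Fin m => 0 < pX j),
      pX j * Finset.univ.sup' ⟨⟨0, by omega⟩, Finset.mem_univ _⟩ (cond j))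
    (Hyx : ℝ) (hHyx : Hyx = ∑ j ∈ Finset.univ.filter (fun j : Fin m => 0 < pX j),
      pX j * entropy (cond j)) :
    hbar q Acc = h ∧ Acc = hbarInv q Hyx := by
  set F := univ.filter (fun j : Fin m => 0 < pX j)
  have hne : (univ : Finset (Fin q)).Nonempty := ⟨⟨0, by omega⟩, mem_univ _⟩
  have hF : ∑ j ∈ F, pX j = 1 := sum_filter_marginal_pos_eq_one hp0 hp1 hpX
  have hrow : ∀ j ∈ F, univ.sup' hne (cond j) ∈ Set.Icc (1 / (q : ℝ)) 1 ∧
      hbar q (univ.sup' hne (cond j)) = h := by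
    intro j hj
    have hj : 0 < pX j := (mem_filter.1 hj).2
    obtain ⟨i₀, hmax, hrest⟩ := hrunner j hj
    rw [← hunif j hj]
    refine sup'_mem_Icc_and_hbar_eq hq hne (fun i => ?_) ?_ hmax hrest
    · rw [hcond]; exact div_nonneg (hp0 _) hj.le
    · simp_rw [hcond, ← sum_div, ← hpX, div_self hj.ne']
  have hsup : ∀ j ∈ F, univ.sup' hne (cond j) = hbarInv q h := fun j hj => by
    rw [← (hrow j hj).2, hbarInv_hbar hq (hrow j hj).1]
  have hAcc' : Acc = hbarInv q h := by
    rw [hAcc, sum_congr rfl fun j hj => by rw [hsup j hj], ← sum_mul, hF, one_mul]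
  have hHyx' : Hyx = h := by
    rw [hHyx, sum_congr rfl fun j hj => by rw [hunif j (mem_filter.1 hj).2], ← sum_mul, hF,
      one_mul]
  obtain ⟨j₀, hj₀⟩ := nonempty_of_sum_ne_zero (hF ▸ one_ne_zero)
  refine ⟨?_, by rw [hAcc', hHyx']⟩
  rw [hAcc', ← hsup j₀ hj₀]
  exact (hrow j₀ hj₀).2
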